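/- arXiv:1501.04918 — 3 statements merged into one kernel-verified Lean document; each statement's English description precedes it below -/
import Mathlib

section
/- Let n ≥ 1 and 0 ≤ a < n/2 (more precisely 2a < n). There exists a constant C > 0 depending only on n and a such that for every r > 0 and every x, y ∈ ℝ^n \ {0}, (1/r^n) ∫_{B_r} |x+z|^{-a} |y+z|^{-a} dz ≤ C |x|^{-a} |y|^{-a}, where B_r ⊂ ℝ^n is the ball of radius r centered at 0. -/
/-!
By Cauchy–Schwarz it suffices to show `∫_{B_r} |x+z|^{-b} dz ≤ C r^n |x|^{-b}` for `b = 2a < n`.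
If `|x| ≥ 2r`, then `|x+z| ≥ |x|/2` on `B_r` and the integrand is at most `2^b |x|^{-b}`.
If `|x| < 2r`, translating gives an integral over `B(x, r) ⊆ B_{3r}`, and by scaling
`∫_{B_{3r}} |w|^{-b} dw = (3r)^{n-b} ∫_{B_1} |w|^{-b} dw`, finite because `b < n`; here
`(3r)^{n-b} ≤ 3^n r^n r^{-b} ≤ 3^n 2^b r^n |x|^{-b}`.
-/

open MeasureTheory Metric Module
open scoped ENNReal

theorem ENNReal.lintegral_mul_le_of_lintegral_sq_le {α : Type*} [MeasurableSpace α]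
    {μ : Measure α} {f g : α → ℝ≥0∞} (hf : AEMeasurable f μ) (hg : AEMeasurable g μ)
    {A B : ℝ≥0∞} (hfA : ∫⁻ x, f x ^ 2 ∂μ ≤ A ^ 2) (hgB : ∫⁻ x, g x ^ 2 ∂μ ≤ B ^ 2) :
    ∫⁻ x, f x * g x ∂μ ≤ A * B := by
  have hsqrt : ∀ {I C : ℝ≥0∞}, I ≤ C ^ 2 → I ^ (1 / 2 : ℝ) ≤ C := fun {I C} h => by
    calc I ^ (1 / 2 : ℝ) ≤ (C ^ 2) ^ (((2 : ℕ) : ℝ)⁻¹) := by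
          rw [one_div, Nat.cast_ofNat]
          exact ENNReal.rpow_le_rpow h (by norm_num)
      _ = C := ENNReal.pow_rpow_inv_natCast two_ne_zero C
  calc ∫⁻ x, f x * g x ∂μ = ∫⁻ x, (f * g) x ∂μ := rfl
    _ ≤ (∫⁻ x, f x ^ (2 : ℝ) ∂μ) ^ (1 / 2 : ℝ) * (∫⁻ x, g x ^ (2 : ℝ) ∂μ) ^ (1 / 2 : ℝ) :=
        ENNReal.lintegral_mul_le_Lp_mul_Lq μ Real.HolderConjugate.two_two hf hg
    _ ≤ A * B := by
        simp only [ENNReal.rpow_two]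
        exact mul_le_mul' (hsqrt hfA) (hsqrt hgB)

theorem Real.rpow_neg_le_two_rpow_mul_rpow_neg {b s t : ℝ} (hb : 0 ≤ b) (ht : 0 < t)
    (hts : t ≤ 2 * s) : s ^ (-b) ≤ 2 ^ b * t ^ (-b) := by
  have hs : 0 ≤ s := by linarith
  calc s ^ (-b) = 2 ^ b * (2 * s) ^ (-b) := by
        rw [Real.mul_rpow zero_le_two hs, Real.rpow_neg zero_le_two, mul_inv_cancel_left₀]
        positivity
    _ ≤ 2 ^ b * t ^ (-b) := by
        gcongr 2 ^ b * ?_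
        exact Real.rpow_le_rpow_of_nonpos ht hts (neg_nonpos.2 hb)

theorem setLIntegral_ball_norm_add_rpow_neg_le_of_two_mul_le {E : Type*} [NormedAddCommGroup E]
    [MeasurableSpace E] (μ : Measure E) {b r : ℝ}
    (hb : 0 ≤ b) (hr : 0 < r) {x : E} (hx : 2 * r ≤ ‖x‖) :
    ∫⁻ z in ball 0 r, ENNReal.ofReal (‖x + z‖ ^ (-b)) ∂μ ≤
      ENNReal.ofReal (2 ^ b * ‖x‖ ^ (-b)) * μ (ball 0 r) := by
  rw [← setLIntegral_const]
  refine setLIntegral_mono measurable_const fun z hz => ENNReal.ofReal_le_ofReal ?_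
  refine Real.rpow_neg_le_two_rpow_mul_rpow_neg hb (by linarith) ?_
  have := norm_sub_le (x + z) z
  rw [add_sub_cancel_right] at this
  linarith [mem_ball_zero_iff.1 hz]

theorem setLIntegral_ball_comp_add_le_of_norm_lt {E : Type*} [NormedAddCommGroup E]
    [MeasurableSpace E] [BorelSpace E] (μ : Measure E) [μ.IsAddLeftInvariant]
    (f : E → ℝ≥0∞) {r : ℝ} {x : E} (hx : ‖x‖ < 2 * r) :
    ∫⁻ z in ball 0 r, f (x + z) ∂μ ≤ ∫⁻ w in ball 0 (3 * r), f w ∂μ := by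
  have hball : (x + ·) ⁻¹' ball x r = ball (0 : E) r := by
    ext z
    simp
  calc ∫⁻ z in ball 0 r, f (x + z) ∂μ = ∫⁻ w in ball x r, f w ∂μ := by
        rw [← hball]
        exact (measurePreserving_add_left μ x).setLIntegral_comp_preimage_emb
          (measurableEmbedding_addLeft x) f _
    _ ≤ ∫⁻ w in ball 0 (3 * r), f w ∂μ := by
        refine lintegral_mono_set fun w hw => mem_ball_zero_iff.2 ?_
        have := norm_le_norm_add_norm_sub' w x
        linarith [mem_ball_iff_norm.1 hw]

section Haar
variable {E : Type*} [NormedAddCommGroup E] [NormedSpace ℝ E] [FiniteDimensional ℝ E]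
  [MeasurableSpace E] [BorelSpace E] (μ : Measure E) [μ.IsAddHaarMeasure]

theorem setIntegral_ball_norm_rpow_neg {R : ℝ} (hR : 0 < R) (b : ℝ) :
    ∫ w in ball 0 R, ‖w‖ ^ (-b) ∂μ =
      R ^ ((finrank ℝ E : ℝ) - b) * ∫ w in ball 0 1, ‖w‖ ^ (-b) ∂μ := by
  have hscale := Measure.setIntegral_comp_smul_of_pos μ (fun w : E => ‖w‖ ^ (-b)) (ball 0 1) hR
  simp only [norm_smul, Real.norm_of_nonneg hR.le, Real.mul_rpow hR.le (norm_nonneg _),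
    integral_const_mul, smul_unitBall_of_pos hR, smul_eq_mul] at hscale
  rw [eq_inv_mul_iff_mul_eq₀ (by positivity)] at hscale
  rw [← hscale, Real.rpow_sub hR, Real.rpow_natCast, div_eq_mul_inv, ← Real.rpow_neg hR.le]
  ring

theorem setLIntegral_ball_norm_rpow_neg {R b : ℝ} (hR : 0 < R) (hd : 1 ≤ finrank ℝ E)
    (hbd : b < finrank ℝ E) :
    ∫⁻ w in ball 0 R, ENNReal.ofReal (‖w‖ ^ (-b)) ∂μ =
      ENNReal.ofReal (R ^ ((finrank ℝ E : ℝ) - b) * ∫ w in ball 0 1, ‖w‖ ^ (-b) ∂μ) := by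
  have hint : IntegrableOn (fun w : E => ‖w‖ ^ (-b)) (ball 0 R) μ :=
    integrableOn_ball_of_norm_le_rpow (C := 1) hd hbd
      (ae_of_all _ fun w => by simp [Real.abs_rpow_of_nonneg (norm_nonneg w)])
      (measurable_norm.pow_const _).aestronglyMeasurable
  rw [← setIntegral_ball_norm_rpow_neg μ hR, ofReal_integral_eq_lintegral_ofReal hint
    (ae_of_all _ fun w => by positivity)]


theorem exists_setLIntegral_ball_norm_add_rpow_neg_le {b : ℝ} (hb : 0 ≤ b)
    (hbd : b < finrank ℝ E) :
    ∃ C : ℝ, 0 < C ∧ ∀ r : ℝ, 0 < r → ∀ x : E, x ≠ 0 →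
      ∫⁻ z in ball 0 r, ENNReal.ofReal (‖x + z‖ ^ (-b)) ∂μ ≤
        ENNReal.ofReal (C * (r ^ finrank ℝ E * ‖x‖ ^ (-b))) := by
  set d := finrank ℝ E
  set K := ∫ w in ball 0 1, ‖w‖ ^ (-b) ∂μ
  have hd : 1 ≤ d := Nat.cast_pos.1 (hb.trans_lt hbd)
  have hK : 0 ≤ K := setIntegral_nonneg measurableSet_ball fun w _ => by positivity
  have hV : 0 < μ.real (ball 0 1) :=
    ENNReal.toReal_pos (measure_ball_pos μ 0 one_pos).ne' measure_ball_lt_top.ne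
  refine ⟨2 ^ b * (μ.real (ball 0 1) + 3 ^ d * K), by positivity, fun r hr x hx => ?_⟩
  rcases le_or_gt (2 * r) ‖x‖ with hfar | hnear
  · calc ∫⁻ z in ball 0 r, ENNReal.ofReal (‖x + z‖ ^ (-b)) ∂μ
        ≤ ENNReal.ofReal (2 ^ b * ‖x‖ ^ (-b)) * μ (ball 0 r) :=
          setLIntegral_ball_norm_add_rpow_neg_le_of_two_mul_le μ hb hr hfar
      _ = ENNReal.ofReal (2 ^ b * ‖x‖ ^ (-b) * (r ^ d * μ.real (ball 0 1))) := by
          rw [Measure.addHaar_ball_of_pos μ 0 hr, ← ofReal_measureReal measure_ball_lt_top.ne,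
            ← ENNReal.ofReal_mul (by positivity), ← ENNReal.ofReal_mul (by positivity)]
      _ ≤ ENNReal.ofReal (2 ^ b * (μ.real (ball 0 1) + 3 ^ d * K) * (r ^ d * ‖x‖ ^ (-b))) := by
          refine ENNReal.ofReal_le_ofReal ?_
          have : 0 ≤ 2 ^ b * (3 ^ d * K) * (r ^ d * ‖x‖ ^ (-b)) := by positivity
          linarith
  · have hr3 : (3 * r) ^ ((d : ℝ) - b) ≤ 3 ^ d * r ^ d * (2 ^ b * ‖x‖ ^ (-b)) := by
      rw [Real.mul_rpow zero_le_three hr.le, Real.rpow_sub hr, Real.rpow_natCast,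
        div_eq_mul_inv, ← Real.rpow_neg hr.le, ← mul_assoc]
      gcongr
      · calc (3 : ℝ) ^ ((d : ℝ) - b) ≤ 3 ^ (d : ℝ) :=
              Real.rpow_le_rpow_of_exponent_le (by norm_num) (by linarith)
          _ = 3 ^ d := Real.rpow_natCast 3 d
      · exact Real.rpow_neg_le_two_rpow_mul_rpow_neg hb (norm_pos_iff.2 hx) hnear.le
    calc ∫⁻ z in ball 0 r, ENNReal.ofReal (‖x + z‖ ^ (-b)) ∂μ
        ≤ ∫⁻ w in ball 0 (3 * r), ENNReal.ofReal (‖w‖ ^ (-b)) ∂μ :=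
          setLIntegral_ball_comp_add_le_of_norm_lt μ _ hnear
      _ = ENNReal.ofReal ((3 * r) ^ ((d : ℝ) - b) * K) :=
          setLIntegral_ball_norm_rpow_neg μ (by positivity) hd hbd
      _ ≤ ENNReal.ofReal (2 ^ b * (μ.real (ball 0 1) + 3 ^ d * K) * (r ^ d * ‖x‖ ^ (-b))) := by
          refine ENNReal.ofReal_le_ofReal ?_
          have : 0 ≤ 2 ^ b * μ.real (ball 0 1) * (r ^ d * ‖x‖ ^ (-b)) := by positivity
          nlinarith [mul_le_mul_of_nonneg_right hr3 hK]

theorem exists_setLIntegral_ball_norm_add_rpow_neg_mul_le {a : ℝ} (ha : 0 ≤ a)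
    (ha' : 2 * a < finrank ℝ E) :
    ∃ C : ℝ, 0 < C ∧ ∀ r : ℝ, 0 < r → ∀ x y : E, x ≠ 0 → y ≠ 0 →
      ∫⁻ z in ball 0 r, ENNReal.ofReal (‖x + z‖ ^ (-a) * ‖y + z‖ ^ (-a)) ∂μ ≤
        ENNReal.ofReal (r ^ finrank ℝ E * (C * (‖x‖ ^ (-a) * ‖y‖ ^ (-a)))) := by
  obtain ⟨C, hC, hweight⟩ :=
    exists_setLIntegral_ball_norm_add_rpow_neg_le μ (b := 2 * a) (by positivity) ha'
  refine ⟨C, hC, fun r hr x y hx hy => ?_⟩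
  have hsq : ∀ v : E, (‖v‖ ^ (-a)) ^ 2 = ‖v‖ ^ (-(2 * a)) := fun v => by
    rw [← Real.rpow_natCast, ← Real.rpow_mul (norm_nonneg v)]
    ring_nf
  set s := √(C * r ^ finrank ℝ E)
  have hbound : ∀ w : E, w ≠ 0 →
      ∫⁻ z in ball 0 r, ENNReal.ofReal (‖w + z‖ ^ (-a)) ^ 2 ∂μ ≤
        ENNReal.ofReal (s * ‖w‖ ^ (-a)) ^ 2 := fun w hw => by
    simp only [← ENNReal.ofReal_pow (Real.rpow_nonneg (norm_nonneg _) _), hsq]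
    rw [← ENNReal.ofReal_pow (by positivity), mul_pow, hsq,
      Real.sq_sqrt (by positivity), mul_assoc]
    exact hweight r hr w hw
  calc ∫⁻ z in ball 0 r, ENNReal.ofReal (‖x + z‖ ^ (-a) * ‖y + z‖ ^ (-a)) ∂μ
      ≤ ENNReal.ofReal (s * ‖x‖ ^ (-a)) * ENNReal.ofReal (s * ‖y‖ ^ (-a)) := by
        simp only [ENNReal.ofReal_mul (Real.rpow_nonneg (norm_nonneg _) _)]
        exact ENNReal.lintegral_mul_le_of_lintegral_sq_le (by fun_prop) (by fun_prop)
          (hbound x hx) (hbound y hy)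
    _ = ENNReal.ofReal (r ^ finrank ℝ E * (C * (‖x‖ ^ (-a) * ‖y‖ ^ (-a)))) := by
        rw [← ENNReal.ofReal_mul (by positivity), mul_mul_mul_comm,
          Real.mul_self_sqrt (by positivity)]
        ring_nf

end Haar

theorem stmt_1_general {n : ℕ} (a : ℝ) (ha : 0 ≤ a) (ha' : 2 * a < n) :
    ∃ C : ℝ, 0 < C ∧ ∀ r : ℝ, 0 < r →
      ∀ x y : EuclideanSpace ℝ (Fin n), x ≠ 0 → y ≠ 0 →
        (ENNReal.ofReal (r ^ n))⁻¹ *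
          ∫⁻ z in Metric.ball (0 : EuclideanSpace ℝ (Fin n)) r,
            ENNReal.ofReal (‖x + z‖ ^ (-a) * ‖y + z‖ ^ (-a)) ≤
        ENNReal.ofReal (C * (‖x‖ ^ (-a) * ‖y‖ ^ (-a))) := by
  obtain ⟨C, hC, hprod⟩ := exists_setLIntegral_ball_norm_add_rpow_neg_mul_le
    (volume : Measure (EuclideanSpace ℝ (Fin n))) ha (by rwa [finrank_euclideanSpace_fin])
  refine ⟨C, hC, fun r hr x y hx hy => ?_⟩
  have hrn : 0 < r ^ n := pow_pos hr n
  calc (ENNReal.ofReal (r ^ n))⁻¹ *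
        ∫⁻ z in ball 0 r, ENNReal.ofReal (‖x + z‖ ^ (-a) * ‖y + z‖ ^ (-a))
      ≤ (ENNReal.ofReal (r ^ n))⁻¹ *
          ENNReal.ofReal (r ^ n * (C * (‖x‖ ^ (-a) * ‖y‖ ^ (-a)))) := by
        gcongr
        simpa only [finrank_euclideanSpace_fin] using hprod r hr x y hx hy
    _ = ENNReal.ofReal (C * (‖x‖ ^ (-a) * ‖y‖ ^ (-a))) := by
        rw [ENNReal.ofReal_mul hrn.le, ENNReal.inv_mul_cancel_left
          (ENNReal.ofReal_pos.2 hrn).ne' ENNReal.ofReal_ne_top]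

/-- Averaged translation estimate for the product weight `|x|^{-a}|y|^{-a}`, with
`0 ≤ a` and `2a < n`. -/
theorem stmt_1 {n : ℕ} (hn : 1 ≤ n) (a : ℝ) (ha : 0 ≤ a) (ha' : 2 * a < n) :
    ∃ C : ℝ, 0 < C ∧ ∀ r : ℝ, 0 < r →
      ∀ x y : EuclideanSpace ℝ (Fin n), x ≠ 0 → y ≠ 0 →
        (ENNReal.ofReal (r ^ n))⁻¹ *
          ∫⁻ z in Metric.ball (0 : EuclideanSpace ℝ (Fin n)) r,
            ENNReal.ofReal (‖x + z‖ ^ (-a) * ‖y + z‖ ^ (-a)) ≤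
        ENNReal.ofReal (C * (‖x‖ ^ (-a) * ‖y‖ ^ (-a))) :=
  stmt_1_general a ha ha'
end

section
/- Let n ≥ 1 and 0 ≤ b < n. There exists a constant C > 0 depending only on n and b such that for every r > 0 and every x ∈ ℝ^n \ {0}, (1/r^n) ∫_{B_r} |x+z|^{-b} dz ≤ C |x|^{-b}. -/
/-!
Split `B(x, r)` at the sphere `‖y‖ = ‖x‖ / 2`. Outside it the weight is at most
`2 ^ b * ‖x‖ ^ (-b)`, which is then multiplied by `vol B(x, r) = r ^ n * vol B₁`. Inside it, the piece
is empty unless `r > ‖x‖ / 2`, and then it is at most `∫_{B(0, ‖x‖/2)} ‖y‖ ^ (-b)`, which by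
scaling is `(‖x‖ / 2) ^ (n - b) * ∫_{B₁} ‖y‖ ^ (-b) ≤ r ^ n * (‖x‖ / 2) ^ (-b) * ∫_{B₁} ‖y‖ ^ (-b)`,
the last integral being finite because `b < n`.
-/

open MeasureTheory Metric Set

section PowerWeight

variable {E : Type*} [NormedAddCommGroup E] [MeasurableSpace E] (μ : Measure E) {b : ℝ}

theorem setLIntegral_ball_zero_comp_add_left [MeasurableAdd E] [μ.IsAddLeftInvariant]
    (f : E → ENNReal) (x : E) (r : ℝ) :
    ∫⁻ z in ball 0 r, f (x + z) ∂μ = ∫⁻ y in ball x r, f y ∂μ := by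
  have := (measurePreserving_add_left μ x).setLIntegral_comp_preimage_emb
    (measurableEmbedding_addLeft x) f (ball x r)
  simpa [preimage_add_ball] using this

theorem setLIntegral_sdiff_ball_zero_norm_rpow_neg_le (hb : 0 ≤ b) (s : Set E) {ρ : ℝ}
    (hρ : 0 < ρ) :
    ∫⁻ y in s \ ball 0 ρ, ENNReal.ofReal (‖y‖ ^ (-b)) ∂μ ≤ ENNReal.ofReal (ρ ^ (-b)) * μ s := by
  calc ∫⁻ y in s \ ball 0 ρ, ENNReal.ofReal (‖y‖ ^ (-b)) ∂μ
      ≤ ∫⁻ _ in s \ ball 0 ρ, ENNReal.ofReal (ρ ^ (-b)) ∂μ := by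
        refine setLIntegral_mono measurable_const fun y hy => ?_
        have hy : ρ ≤ ‖y‖ := by simpa using hy.2
        exact ENNReal.ofReal_le_ofReal (Real.rpow_le_rpow_of_nonpos hρ hy (by linarith))
    _ ≤ ENNReal.ofReal (ρ ^ (-b)) * μ s := by
        rw [setLIntegral_const]
        gcongr
        exact sdiff_subset

variable [NormedSpace ℝ E] [BorelSpace E] [FiniteDimensional ℝ E] [μ.IsAddHaarMeasure]

theorem setLIntegral_ball_zero_comp_smul {f : E → ENNReal} (hf : Measurable f) {ρ : ℝ}
    (hρ : 0 < ρ) :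
    ∫⁻ y in ball 0 ρ, f y ∂μ =
      ENNReal.ofReal (ρ ^ Module.finrank ℝ E) * ∫⁻ z in ball 0 1, f (ρ • z) ∂μ := by
  have hpre : (ρ • ·) ⁻¹' ball (0 : E) ρ = ball 0 1 := by
    rw [preimage_smul₀ hρ.ne', _root_.smul_ball (inv_ne_zero hρ.ne'), smul_zero,
      Real.norm_eq_abs, abs_inv, abs_of_pos hρ, inv_mul_cancel₀ hρ.ne']
  rw [← hpre, ← setLIntegral_map measurableSet_ball hf (measurable_const_smul ρ),
    Measure.map_addHaar_smul μ hρ.ne', Measure.restrict_smul, lintegral_smul_measure, smul_eq_mul,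
    ← mul_assoc, ← ENNReal.ofReal_mul (by positivity), abs_inv, abs_of_pos (by positivity),
    mul_inv_cancel₀ (by positivity), ENNReal.ofReal_one, one_mul]

theorem setLIntegral_ball_zero_norm_rpow_neg {ρ : ℝ} (hρ : 0 < ρ) :
    ∫⁻ y in ball 0 ρ, ENNReal.ofReal (‖y‖ ^ (-b)) ∂μ =
      ENNReal.ofReal (ρ ^ Module.finrank ℝ E) * ENNReal.ofReal (ρ ^ (-b)) *
        ∫⁻ y in ball 0 1, ENNReal.ofReal (‖y‖ ^ (-b)) ∂μ := by
  rw [setLIntegral_ball_zero_comp_smul μ (by fun_prop) hρ, mul_assoc,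
    ← lintegral_const_mul (ENNReal.ofReal (ρ ^ (-b))) (by fun_prop)]
  congr 1
  refine lintegral_congr fun z => ?_
  rw [norm_smul, Real.norm_eq_abs, abs_of_pos hρ, Real.mul_rpow hρ.le (norm_nonneg z),
    ENNReal.ofReal_mul (by positivity)]

theorem setLIntegral_unitBall_norm_rpow_neg_lt_top (hE : 1 ≤ Module.finrank ℝ E)
    (hb : b < Module.finrank ℝ E) :
    ∫⁻ y in ball 0 1, ENNReal.ofReal (‖y‖ ^ (-b)) ∂μ < ⊤ := by
  refine Integrable.lintegral_lt_top (integrableOn_ball_of_norm_le_rpow (C := 1) hE hb ?_ ?_)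
  · refine ae_of_all _ fun y => ?_
    rw [one_mul, Real.norm_of_nonneg (by positivity)]
  · exact (measurable_norm.pow_const _).aestronglyMeasurable

theorem setLIntegral_ball_norm_rpow_neg_le (hb : 0 ≤ b) {x : E} (hx : x ≠ 0) {r : ℝ}
    (hr : 0 < r) :
    ∫⁻ y in ball x r, ENNReal.ofReal (‖y‖ ^ (-b)) ∂μ ≤
      ENNReal.ofReal (r ^ Module.finrank ℝ E) * ENNReal.ofReal ((‖x‖ / 2) ^ (-b)) *
        (μ (ball 0 1) + ∫⁻ y in ball 0 1, ENNReal.ofReal (‖y‖ ^ (-b)) ∂μ) := by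
  have : Nontrivial E := ⟨x, 0, hx⟩
  set ρ := ‖x‖ / 2 with hρ_def
  have hρ : 0 < ρ := by positivity
  have near : ∫⁻ y in ball x r ∩ ball 0 ρ, ENNReal.ofReal (‖y‖ ^ (-b)) ∂μ ≤
      ENNReal.ofReal (r ^ Module.finrank ℝ E) * ENNReal.ofReal (ρ ^ (-b)) *
        ∫⁻ y in ball 0 1, ENNReal.ofReal (‖y‖ ^ (-b)) ∂μ := by
    rcases le_or_gt r ρ with hrρ | hρr
    · have hempty : ball x r ∩ ball 0 ρ = ∅ := by
        refine eq_empty_of_forall_notMem fun y ⟨hyx, hy0⟩ => ?_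
        rw [mem_ball_iff_norm] at hyx
        rw [mem_ball_zero_iff] at hy0
        linarith [norm_sub_norm_le x y, norm_sub_rev y x]
      simp [hempty]
    · calc ∫⁻ y in ball x r ∩ ball 0 ρ, ENNReal.ofReal (‖y‖ ^ (-b)) ∂μ
          ≤ ∫⁻ y in ball 0 ρ, ENNReal.ofReal (‖y‖ ^ (-b)) ∂μ := lintegral_mono_set inter_subset_right
        _ = ENNReal.ofReal (ρ ^ Module.finrank ℝ E) * ENNReal.ofReal (ρ ^ (-b)) *
              ∫⁻ y in ball 0 1, ENNReal.ofReal (‖y‖ ^ (-b)) ∂μ :=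
            setLIntegral_ball_zero_norm_rpow_neg μ hρ
        _ ≤ _ := by gcongr
  have far := setLIntegral_sdiff_ball_zero_norm_rpow_neg_le μ hb (ball x r) hρ
  rw [Measure.addHaar_ball μ x hr.le] at far
  calc ∫⁻ y in ball x r, ENNReal.ofReal (‖y‖ ^ (-b)) ∂μ
      = ∫⁻ y in ball x r ∩ ball 0 ρ, ENNReal.ofReal (‖y‖ ^ (-b)) ∂μ +
          ∫⁻ y in ball x r \ ball 0 ρ, ENNReal.ofReal (‖y‖ ^ (-b)) ∂μ :=
        (lintegral_inter_add_sdiff _ _ measurableSet_ball).symm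
    _ ≤ _ := add_le_add near far
    _ = _ := by ring

end PowerWeight

/-- Averaged translation estimate for the power weight `|x|^{-b}`, with `0 ≤ b < n`. -/
theorem stmt_2 {n : ℕ} (hn : 1 ≤ n) (b : ℝ) (hb : 0 ≤ b) (hb' : b < n) :
    ∃ C : ℝ, 0 < C ∧ ∀ r : ℝ, 0 < r →
      ∀ x : EuclideanSpace ℝ (Fin n), x ≠ 0 →
        (ENNReal.ofReal (r ^ n))⁻¹ *
          ∫⁻ z in Metric.ball (0 : EuclideanSpace ℝ (Fin n)) r,
            ENNReal.ofReal (‖x + z‖ ^ (-b)) ≤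
        ENNReal.ofReal (C * ‖x‖ ^ (-b)) := by
  set K := volume (ball (0 : EuclideanSpace ℝ (Fin n)) 1) +
    ∫⁻ y in ball (0 : EuclideanSpace ℝ (Fin n)) 1, ENNReal.ofReal (‖y‖ ^ (-b))
  have hK_ne_top : K ≠ ⊤ := ENNReal.add_ne_top.2 ⟨measure_ball_lt_top.ne,
    (setLIntegral_unitBall_norm_rpow_neg_lt_top volume (by simpa) (by simpa)).ne⟩
  have hK_pos : 0 < K.toReal := ENNReal.toReal_pos
    (ne_of_gt ((measure_ball_pos _ _ one_pos).trans_le le_self_add)) hK_ne_top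
  refine ⟨2 ^ b * K.toReal, by positivity, fun r hr x hx => ?_⟩
  have hrn : ENNReal.ofReal (r ^ n) ≠ 0 := by positivity
  have hhalf : (‖x‖ / 2) ^ (-b) = 2 ^ b * ‖x‖ ^ (-b) := by
    rw [Real.div_rpow (norm_nonneg x) zero_le_two, Real.rpow_neg zero_le_two, div_inv_eq_mul,
      mul_comm]
  calc (ENNReal.ofReal (r ^ n))⁻¹ * ∫⁻ z in ball 0 r, ENNReal.ofReal (‖x + z‖ ^ (-b))
      = (ENNReal.ofReal (r ^ n))⁻¹ * ∫⁻ y in ball x r, ENNReal.ofReal (‖y‖ ^ (-b)) := by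
        rw [setLIntegral_ball_zero_comp_add_left volume (fun y => ENNReal.ofReal (‖y‖ ^ (-b)))]
    _ ≤ (ENNReal.ofReal (r ^ n))⁻¹ * (ENNReal.ofReal (r ^ n) *
          ENNReal.ofReal ((‖x‖ / 2) ^ (-b)) * K) := by
        gcongr
        simpa using setLIntegral_ball_norm_rpow_neg_le volume hb hx hr
    _ = ENNReal.ofReal (2 ^ b * K.toReal * ‖x‖ ^ (-b)) := by
        rw [← mul_assoc, ← mul_assoc, ENNReal.inv_mul_cancel hrn ENNReal.ofReal_ne_top, one_mul,
          hhalf, show 2 ^ b * K.toReal * ‖x‖ ^ (-b) = 2 ^ b * ‖x‖ ^ (-b) * K.toReal by ring,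
          ENNReal.ofReal_mul (by positivity : (0 : ℝ) ≤ 2 ^ b * ‖x‖ ^ (-b)),
          ENNReal.ofReal_toReal hK_ne_top]
end

section
/- Let N, n ≥ 1, q > 1, let ϖ : ℝ^n → ℝ^N be measurable, and let Θ : ℝ^N → [0,∞] be measurable. Assume there is C₀ > 0 such that for every r > 0 and a.e. X ∈ ℝ^N, (1/r^n) ∫_{B_r} Θ(X + ϖ(z))^{-1} dz ≤ C₀ Θ(X)^{-1}. Then there exists C > 0 such that for every measurable V : ℝ^N → ℝ and every r > 0, ∫_{ℝ^N} [ (1/r^n) ∫_{B_r} |V(X - ϖ(z))| dz ]^q Θ(X)^{-1} dX ≤ C ∫_{ℝ^N} |V(X)|^q Θ(X)^{-1} dX. -/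
open MeasureTheory

/-- Hölder with the constant function: `(∫ f)^q ≤ μ(univ)^(q-1) * ∫ f^q`. -/
lemma holder_aux_stmt4 {α : Type*} [MeasurableSpace α] (μ : Measure α) {q : ℝ} (hq : 1 < q)
    {f : α → ENNReal} (hf : AEMeasurable f μ) :
    (∫⁻ x, f x ∂μ) ^ q ≤ (μ Set.univ) ^ (q - 1) * ∫⁻ x, f x ^ q ∂μ := by
  have hq0 : (0:ℝ) < q := lt_trans one_pos hq
  have hpq : q.HolderConjugate q.conjExponent := Real.HolderConjugate.conjExponent hq
  have h := ENNReal.lintegral_mul_le_Lp_mul_Lq μ hpq hf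
    (aemeasurable_const : AEMeasurable (fun _ : α => (1:ENNReal)) μ)
  simp only [Pi.mul_apply, mul_one, ENNReal.one_rpow, lintegral_one] at h
  have h2 := ENNReal.rpow_le_rpow h (le_of_lt hq0)
  calc (∫⁻ x, f x ∂μ) ^ q
      ≤ ((∫⁻ a, f a ^ q ∂μ) ^ (1/q) * (μ Set.univ) ^ (1/q.conjExponent)) ^ q := h2
    _ = ((∫⁻ a, f a ^ q ∂μ) ^ (1/q)) ^ q * ((μ Set.univ) ^ (1/q.conjExponent)) ^ q := by
        rw [ENNReal.mul_rpow_of_nonneg _ _ (le_of_lt hq0)]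
    _ = (∫⁻ a, f a ^ q ∂μ) * (μ Set.univ) ^ (q - 1) := by
        rw [← ENNReal.rpow_mul, ← ENNReal.rpow_mul]
        congr 1
        · rw [one_div_mul_cancel (ne_of_gt hq0), ENNReal.rpow_one]
        · congr 1
          rw [Real.conjExponent]
          field_simp
    _ = (μ Set.univ) ^ (q - 1) * ∫⁻ a, f a ^ q ∂μ := mul_comm _ _

/-- Weighted bound for the averaged translation operator along a map `ϖ`, under an
averaged translation-control condition on the weight `1/Θ`. -/
theorem stmt_4 {N n : ℕ} (hN : 1 ≤ N) (hn : 1 ≤ n) (q : ℝ) (hq : 1 < q)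
    (ϖ : EuclideanSpace ℝ (Fin n) → EuclideanSpace ℝ (Fin N)) (hϖ : Measurable ϖ)
    (Θ : EuclideanSpace ℝ (Fin N) → ENNReal) (hΘ : Measurable Θ)
    (C₀ : ℝ) (hC₀ : 0 < C₀)
    (hbasic : ∀ r : ℝ, 0 < r →
      ∀ᵐ X : EuclideanSpace ℝ (Fin N),
        (ENNReal.ofReal (r ^ n))⁻¹ *
            ∫⁻ z in Metric.ball (0 : EuclideanSpace ℝ (Fin n)) r, (Θ (X + ϖ z))⁻¹ ≤
          ENNReal.ofReal C₀ * (Θ X)⁻¹) :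
    ∃ C : ℝ, 0 < C ∧
      ∀ V : EuclideanSpace ℝ (Fin N) → ℝ, Measurable V → ∀ r : ℝ, 0 < r →
        ∫⁻ X : EuclideanSpace ℝ (Fin N),
            ((ENNReal.ofReal (r ^ n))⁻¹ *
                ∫⁻ z in Metric.ball (0 : EuclideanSpace ℝ (Fin n)) r,
                  ENNReal.ofReal |V (X - ϖ z)|) ^ q * (Θ X)⁻¹ ≤
          ENNReal.ofReal C *
            ∫⁻ X : EuclideanSpace ℝ (Fin N),
              ENNReal.ofReal |V X| ^ q * (Θ X)⁻¹ := by
  classical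
  have hq0 : (0:ℝ) < q := lt_trans one_pos hq
  haveI : Nontrivial (EuclideanSpace ℝ (Fin n)) := by
    have : Nonempty (Fin n) := ⟨⟨0, by omega⟩⟩
    infer_instance
  set κ : ENNReal := volume (Metric.ball (0 : EuclideanSpace ℝ (Fin n)) 1) with hκdef
  have hκ_pos : 0 < κ := Metric.measure_ball_pos _ _ one_pos
  have hκ_fin : κ ≠ ⊤ := measure_ball_lt_top.ne
  have hκt_pos : 0 < κ.toReal := ENNReal.toReal_pos hκ_pos.ne' hκ_fin
  refine ⟨C₀ * κ.toReal ^ (q - 1), by positivity, ?_⟩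
  intro V hV r hr
  set B := Metric.ball (0 : EuclideanSpace ℝ (Fin n)) r with hB
  have hrn : (0:ℝ) < r ^ n := pow_pos hr n
  set a : ENNReal := ENNReal.ofReal (r ^ n) with ha
  have ha0 : a ≠ 0 := by
    simp only [ha, ne_eq, ENNReal.ofReal_eq_zero, not_le]
    exact hrn
  have hatop : a ≠ ⊤ := ENNReal.ofReal_ne_top
  have hvolB : volume B = a * κ := by
    rw [hB, Measure.addHaar_ball _ _ hr.le, finrank_euclideanSpace_fin, ← hκdef]
  -- measurability helpers
  have hsub : Measurable fun p : EuclideanSpace ℝ (Fin N) × EuclideanSpace ℝ (Fin n) =>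
      p.1 - ϖ p.2 := measurable_fst.sub (hϖ.comp measurable_snd)
  have hVabs : Measurable fun Y => ENNReal.ofReal |V Y| :=
    ENNReal.measurable_ofReal.comp hV.abs
  have hVq : Measurable fun Y => ENNReal.ofReal |V Y| ^ q :=
    (ENNReal.continuous_rpow_const).measurable.comp hVabs
  have hFq : Measurable (Function.uncurry fun
      (X : EuclideanSpace ℝ (Fin N)) (z : EuclideanSpace ℝ (Fin n)) =>
      ENNReal.ofReal |V (X - ϖ z)| ^ q * (Θ X)⁻¹) :=
    (((ENNReal.continuous_rpow_const).measurable.comp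
        (ENNReal.measurable_ofReal.comp ((hV.comp hsub).abs))).mul
      ((hΘ.comp measurable_fst).inv))
  have hGq : Measurable (Function.uncurry fun
      (Y : EuclideanSpace ℝ (Fin N)) (z : EuclideanSpace ℝ (Fin n)) =>
      ENNReal.ofReal |V Y| ^ q * (Θ (Y + ϖ z))⁻¹) :=
    ((hVq.comp measurable_fst).mul
      ((hΘ.comp (measurable_fst.add (hϖ.comp measurable_snd))).inv))
  have hVq_ne_top : ∀ Y : EuclideanSpace ℝ (Fin N), ENNReal.ofReal |V Y| ^ q ≠ ⊤ := fun Y =>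
    ENNReal.rpow_ne_top_of_nonneg hq0.le ENNReal.ofReal_ne_top
  -- Step 1: Hölder pointwise in X
  have step1 : ∀ X : EuclideanSpace ℝ (Fin N),
      ((a⁻¹ * ∫⁻ z in B, ENNReal.ofReal |V (X - ϖ z)|) ^ q) * (Θ X)⁻¹ ≤
        (a⁻¹ ^ q * ((a * κ) ^ (q - 1))) *
          ((∫⁻ z in B, ENNReal.ofReal |V (X - ϖ z)| ^ q) * (Θ X)⁻¹) := by
    intro X
    rw [← mul_assoc, mul_assoc (a⁻¹ ^ q)]
    apply mul_le_mul_left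
    rw [ENNReal.mul_rpow_of_nonneg _ _ hq0.le]
    apply mul_le_mul_right
    have hmeas : AEMeasurable (fun z => ENNReal.ofReal |V (X - ϖ z)|) (volume.restrict B) :=
      (ENNReal.measurable_ofReal.comp ((hV.comp (measurable_const.sub hϖ)).abs)).aemeasurable
    have h := holder_aux_stmt4 (volume.restrict B) hq hmeas
    rwa [Measure.restrict_apply_univ, hvolB] at h
  -- main computation
  have swap1 :
      ∫⁻ X, ∫⁻ z in B, ENNReal.ofReal |V (X - ϖ z)| ^ q * (Θ X)⁻¹ =
      ∫⁻ z in B, ∫⁻ X, ENNReal.ofReal |V (X - ϖ z)| ^ q * (Θ X)⁻¹ :=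
    lintegral_lintegral_swap hFq.aemeasurable
  have trans1 : ∀ z : EuclideanSpace ℝ (Fin n),
      (∫⁻ X, ENNReal.ofReal |V (X - ϖ z)| ^ q * (Θ X)⁻¹) =
      ∫⁻ Y, ENNReal.ofReal |V Y| ^ q * (Θ (Y + ϖ z))⁻¹ := by
    intro z
    have := lintegral_sub_right_eq_self
      (μ := (volume : Measure (EuclideanSpace ℝ (Fin N))))
      (fun Y => ENNReal.ofReal |V Y| ^ q * (Θ (Y + ϖ z))⁻¹) (ϖ z)
    rw [← this]
    congr 1
    funext X
    rw [sub_add_cancel]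
  have swap2 :
      ∫⁻ z in B, ∫⁻ Y, ENNReal.ofReal |V Y| ^ q * (Θ (Y + ϖ z))⁻¹ =
      ∫⁻ Y, ∫⁻ z in B, ENNReal.ofReal |V Y| ^ q * (Θ (Y + ϖ z))⁻¹ :=
    (lintegral_lintegral_swap hGq.aemeasurable).symm
  have pull : ∀ Y : EuclideanSpace ℝ (Fin N),
      (∫⁻ z in B, ENNReal.ofReal |V Y| ^ q * (Θ (Y + ϖ z))⁻¹) =
      ENNReal.ofReal |V Y| ^ q * ∫⁻ z in B, (Θ (Y + ϖ z))⁻¹ := fun Y =>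
    lintegral_const_mul' _ _ (hVq_ne_top Y)
  -- the basic hypothesis, rescaled
  have hbasic' : ∀ᵐ Y : EuclideanSpace ℝ (Fin N),
      (∫⁻ z in B, (Θ (Y + ϖ z))⁻¹) ≤ a * (ENNReal.ofReal C₀ * (Θ Y)⁻¹) := by
    filter_upwards [hbasic r hr] with Y hY
    calc (∫⁻ z in B, (Θ (Y + ϖ z))⁻¹)
        = a * (a⁻¹ * ∫⁻ z in B, (Θ (Y + ϖ z))⁻¹) := by
          rw [← mul_assoc, ENNReal.mul_inv_cancel ha0 hatop, one_mul]
      _ ≤ a * (ENNReal.ofReal C₀ * (Θ Y)⁻¹) := mul_le_mul_right hY a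
  -- constant computation
  have hconst : (a⁻¹ ^ q * ((a * κ) ^ (q - 1))) * (a * ENNReal.ofReal C₀) =
      ENNReal.ofReal (C₀ * κ.toReal ^ (q - 1)) := by
    have hq1 : (0:ℝ) ≤ q - 1 := by linarith
    rw [ENNReal.mul_rpow_of_nonneg _ _ hq1, ENNReal.inv_rpow]
    have haq : a ^ q = a ^ (q - 1) * a := by
      nth_rewrite 3 [← ENNReal.rpow_one a]
      rw [← ENNReal.rpow_add _ _ ha0 hatop, sub_add_cancel]
    have hane0 : a ^ (q-1) ≠ 0 := by
      simp only [ne_eq, ENNReal.rpow_eq_zero_iff, not_or]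
      constructor
      · rintro ⟨h, -⟩; exact ha0 h
      · rintro ⟨h, -⟩; exact hatop h
    have hκeq : κ ^ (q - 1) = ENNReal.ofReal (κ.toReal ^ (q - 1)) := by
      rw [← ENNReal.ofReal_rpow_of_pos hκt_pos, ENNReal.ofReal_toReal hκ_fin]
    calc ((a ^ q)⁻¹ * (a ^ (q-1) * κ ^ (q-1))) * (a * ENNReal.ofReal C₀)
        = (a ^ q)⁻¹ * (a ^ (q-1) * a) * (κ ^ (q-1) * ENNReal.ofReal C₀) := by ring
      _ = (a ^ q)⁻¹ * a ^ q * (κ ^ (q-1) * ENNReal.ofReal C₀) := by rw [← haq]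
      _ = κ ^ (q-1) * ENNReal.ofReal C₀ := by
          rw [ENNReal.inv_mul_cancel (by
            simp only [ne_eq, ENNReal.rpow_eq_zero_iff, not_or]
            constructor
            · rintro ⟨h, -⟩; exact ha0 h
            · rintro ⟨h, -⟩; exact hatop h)
            (ENNReal.rpow_ne_top_of_nonneg hq0.le hatop), one_mul]
      _ = ENNReal.ofReal (C₀ * κ.toReal ^ (q - 1)) := by
          rw [hκeq, mul_comm, ← ENNReal.ofReal_mul hC₀.le]
  calc ∫⁻ X, ((a⁻¹ * ∫⁻ z in B, ENNReal.ofReal |V (X - ϖ z)|) ^ q) * (Θ X)⁻¹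
      ≤ ∫⁻ X, (a⁻¹ ^ q * ((a * κ) ^ (q - 1))) *
          ((∫⁻ z in B, ENNReal.ofReal |V (X - ϖ z)| ^ q) * (Θ X)⁻¹) :=
        lintegral_mono step1
    _ = (a⁻¹ ^ q * ((a * κ) ^ (q - 1))) *
          ∫⁻ X, (∫⁻ z in B, ENNReal.ofReal |V (X - ϖ z)| ^ q) * (Θ X)⁻¹ := by
        apply lintegral_const_mul'
        exact ENNReal.mul_ne_top
          (ENNReal.rpow_ne_top_of_nonneg hq0.le (by simp [ENNReal.inv_ne_top, ha0]))
          (ENNReal.rpow_ne_top_of_nonneg (by linarith) (ENNReal.mul_ne_top hatop hκ_fin))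
    _ = (a⁻¹ ^ q * ((a * κ) ^ (q - 1))) *
          ∫⁻ X, ∫⁻ z in B, ENNReal.ofReal |V (X - ϖ z)| ^ q * (Θ X)⁻¹ := by
        congr 1
        apply lintegral_congr
        intro X
        exact (lintegral_mul_const _ ((ENNReal.continuous_rpow_const).measurable.comp
          (ENNReal.measurable_ofReal.comp ((hV.comp (measurable_const.sub hϖ)).abs)))).symm
    _ = (a⁻¹ ^ q * ((a * κ) ^ (q - 1))) *
          ∫⁻ Y, ENNReal.ofReal |V Y| ^ q * ∫⁻ z in B, (Θ (Y + ϖ z))⁻¹ := by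
        rw [swap1]
        congr 1
        calc ∫⁻ z in B, ∫⁻ X, ENNReal.ofReal |V (X - ϖ z)| ^ q * (Θ X)⁻¹
            = ∫⁻ z in B, ∫⁻ Y, ENNReal.ofReal |V Y| ^ q * (Θ (Y + ϖ z))⁻¹ :=
              lintegral_congr fun z => trans1 z
          _ = ∫⁻ Y, ∫⁻ z in B, ENNReal.ofReal |V Y| ^ q * (Θ (Y + ϖ z))⁻¹ := swap2
          _ = ∫⁻ Y, ENNReal.ofReal |V Y| ^ q * ∫⁻ z in B, (Θ (Y + ϖ z))⁻¹ :=
              lintegral_congr pull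
    _ ≤ (a⁻¹ ^ q * ((a * κ) ^ (q - 1))) *
          ∫⁻ Y, ENNReal.ofReal |V Y| ^ q * (a * (ENNReal.ofReal C₀ * (Θ Y)⁻¹)) := by
        apply mul_le_mul_right
        apply lintegral_mono_ae
        filter_upwards [hbasic'] with Y hY
        exact mul_le_mul_right hY _
    _ = (a⁻¹ ^ q * ((a * κ) ^ (q - 1))) * ((a * ENNReal.ofReal C₀) *
          ∫⁻ Y, ENNReal.ofReal |V Y| ^ q * (Θ Y)⁻¹) := by
        congr 1
        have hpt : ∀ Y : EuclideanSpace ℝ (Fin N),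
            ENNReal.ofReal |V Y| ^ q * (a * (ENNReal.ofReal C₀ * (Θ Y)⁻¹)) =
            (a * ENNReal.ofReal C₀) * (ENNReal.ofReal |V Y| ^ q * (Θ Y)⁻¹) := fun Y => by ring
        rw [lintegral_congr hpt, lintegral_const_mul' _ _
          (ENNReal.mul_ne_top hatop ENNReal.ofReal_ne_top)]
    _ = ENNReal.ofReal (C₀ * κ.toReal ^ (q - 1)) *
          ∫⁻ Y, ENNReal.ofReal |V Y| ^ q * (Θ Y)⁻¹ := by
        rw [← mul_assoc, hconst]
end
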